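/- Let k be an algebraically closed field of characteristic different from 3 and let Φ₀ := {[x:y:z] ∈ ℙ²(k) : x³ + y³ + z³ = xyz = 0}. If G ∈ k[x,y,z] is a homogeneous cubic form vanishing at every point of Φ₀, then G is a k-linear combination of x³ + y³ + z³ and xyz. In other words, the k-vector space of ternary cubic forms vanishing on Φ₀ is exactly the 2-dimensional span of x³ + y³ + z³ and xyz. -/

import Mathlib

open MvPolynomial
open scoped LinearAlgebra.Projectivization

noncomputable section

/-- The flex scheme `Φ₀ = {[x:y:z] ∈ ℙ²(k) : x³ + y³ + z³ = xyz = 0}`. -/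
def flexScheme0 (k : Type*) [Field k] : Set (ℙ k (Fin 3 → k)) :=
  {P | P.rep 0 ^ 3 + P.rep 1 ^ 3 + P.rep 2 ^ 3 = 0 ∧ P.rep 0 * P.rep 1 * P.rep 2 = 0}

private lemma fin3_finsupp_eq_iff (f g : Fin 3 →₀ ℕ) :
    f = g ↔ (f 0 = g 0 ∧ f 1 = g 1 ∧ f 2 = g 2) := by
  constructor
  · rintro rfl; exact ⟨rfl, rfl, rfl⟩
  · rintro ⟨h0, h1, h2⟩; ext i; fin_cases i <;> assumption

private lemma fin3_degree (m : Fin 3 →₀ ℕ) : m.degree = m 0 + m 1 + m 2 := by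
  rw [Finsupp.degree_apply, Finset.sum_subset (Finset.subset_univ _)]
  · exact Fin.sum_univ_three m
  · intro i _ hi; exact Finsupp.notMem_support_iff.mp hi

set_option maxHeartbeats 1000000 in
private lemma enum3 (m : Fin 3 →₀ ℕ) (h : m 0 + m 1 + m 2 = 3) :
    m = Finsupp.single 0 3 ∨ m = Finsupp.single 1 3 ∨ m = Finsupp.single 2 3 ∨
    m = Finsupp.single 0 2 + Finsupp.single 1 1 ∨
    m = Finsupp.single 0 2 + Finsupp.single 2 1 ∨
    m = Finsupp.single 0 1 + Finsupp.single 1 2 ∨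
    m = Finsupp.single 1 2 + Finsupp.single 2 1 ∨
    m = Finsupp.single 0 1 + Finsupp.single 2 2 ∨
    m = Finsupp.single 1 1 + Finsupp.single 2 2 ∨
    m = Finsupp.single 0 1 + Finsupp.single 1 1 + Finsupp.single 2 1 := by
  have hm : m = Finsupp.single 0 (m 0) + Finsupp.single 1 (m 1) + Finsupp.single 2 (m 2) := by
    ext i; fin_cases i <;> simp [Finsupp.single_apply]
  have h0 : m 0 ≤ 3 := by omega
  have h1 : m 1 ≤ 3 := by omega
  interval_cases hm0 : (m 0) <;> interval_cases hm1 : (m 1) <;>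
    first
    | exact absurd h (by omega)
    | (rw [hm, show m 2 = 0 from by omega];
       simp only [Finsupp.single_zero, add_zero, zero_add]; tauto)
    | (rw [hm, show m 2 = 1 from by omega];
       simp only [Finsupp.single_zero, add_zero, zero_add]; tauto)
    | (rw [hm, show m 2 = 2 from by omega];
       simp only [Finsupp.single_zero, add_zero, zero_add]; tauto)
    | (rw [hm, show m 2 = 3 from by omega];
       simp only [Finsupp.single_zero, add_zero, zero_add]; tauto)

private lemma hE10 {k : Type*} [CommRing k] (c1 c2 c3 c4 c5 c6 c7 c8 c9 c10 : k) :
    IsHomogeneous ((monomial (Finsupp.single 0 3) c1 : MvPolynomial (Fin 3) k)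
      + monomial (Finsupp.single 1 3) c2
      + monomial (Finsupp.single 2 3) c3
      + monomial (Finsupp.single 0 2 + Finsupp.single 1 1) c4
      + monomial (Finsupp.single 0 2 + Finsupp.single 2 1) c5
      + monomial (Finsupp.single 0 1 + Finsupp.single 1 2) c6
      + monomial (Finsupp.single 1 2 + Finsupp.single 2 1) c7
      + monomial (Finsupp.single 0 1 + Finsupp.single 2 2) c8
      + monomial (Finsupp.single 1 1 + Finsupp.single 2 2) c9
      + monomial (Finsupp.single 0 1 + Finsupp.single 1 1 + Finsupp.single 2 1) c10) 3 := by
  repeat' apply IsHomogeneous.add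
  all_goals (apply isHomogeneous_monomial; rw [fin3_degree]; simp [Finsupp.single_apply])

set_option maxHeartbeats 2000000 in
private lemma cubic_decomp {k : Type*} [CommRing k] (G : MvPolynomial (Fin 3) k)
    (hG : G.IsHomogeneous 3) :
    G = monomial (Finsupp.single 0 3) (coeff (Finsupp.single 0 3) G)
      + monomial (Finsupp.single 1 3) (coeff (Finsupp.single 1 3) G)
      + monomial (Finsupp.single 2 3) (coeff (Finsupp.single 2 3) G)
      + monomial (Finsupp.single 0 2 + Finsupp.single 1 1)
          (coeff (Finsupp.single 0 2 + Finsupp.single 1 1) G)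
      + monomial (Finsupp.single 0 2 + Finsupp.single 2 1)
          (coeff (Finsupp.single 0 2 + Finsupp.single 2 1) G)
      + monomial (Finsupp.single 0 1 + Finsupp.single 1 2)
          (coeff (Finsupp.single 0 1 + Finsupp.single 1 2) G)
      + monomial (Finsupp.single 1 2 + Finsupp.single 2 1)
          (coeff (Finsupp.single 1 2 + Finsupp.single 2 1) G)
      + monomial (Finsupp.single 0 1 + Finsupp.single 2 2)
          (coeff (Finsupp.single 0 1 + Finsupp.single 2 2) G)
      + monomial (Finsupp.single 1 1 + Finsupp.single 2 2)
          (coeff (Finsupp.single 1 1 + Finsupp.single 2 2) G)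
      + monomial (Finsupp.single 0 1 + Finsupp.single 1 1 + Finsupp.single 2 1)
          (coeff (Finsupp.single 0 1 + Finsupp.single 1 1 + Finsupp.single 2 1) G) := by
  have hE := hE10 (coeff (Finsupp.single 0 3) G) (coeff (Finsupp.single 1 3) G)
    (coeff (Finsupp.single 2 3) G)
    (coeff (Finsupp.single 0 2 + Finsupp.single 1 1) G)
    (coeff (Finsupp.single 0 2 + Finsupp.single 2 1) G)
    (coeff (Finsupp.single 0 1 + Finsupp.single 1 2) G)
    (coeff (Finsupp.single 1 2 + Finsupp.single 2 1) G)
    (coeff (Finsupp.single 0 1 + Finsupp.single 2 2) G)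
    (coeff (Finsupp.single 1 1 + Finsupp.single 2 2) G)
    (coeff (Finsupp.single 0 1 + Finsupp.single 1 1 + Finsupp.single 2 1) G)
  apply MvPolynomial.ext
  intro m
  by_cases hd : m 0 + m 1 + m 2 = 3
  · rcases enum3 m hd with rfl | rfl | rfl | rfl | rfl | rfl | rfl | rfl | rfl | rfl <;>
      simp [coeff_monomial, fin3_finsupp_eq_iff, Finsupp.single_apply]
  · have hdeg : m.degree ≠ 3 := by rw [fin3_degree]; exact hd
    exact (hG.coeff_eq_zero hdeg).trans (hE.coeff_eq_zero hdeg).symm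

private lemma eval10 {k : Type*} [CommRing k] (c1 c2 c3 c4 c5 c6 c7 c8 c9 c10 : k)
    (x : Fin 3 → k) :
    eval x ((monomial (Finsupp.single 0 3) c1 : MvPolynomial (Fin 3) k)
      + monomial (Finsupp.single 1 3) c2
      + monomial (Finsupp.single 2 3) c3
      + monomial (Finsupp.single 0 2 + Finsupp.single 1 1) c4
      + monomial (Finsupp.single 0 2 + Finsupp.single 2 1) c5
      + monomial (Finsupp.single 0 1 + Finsupp.single 1 2) c6
      + monomial (Finsupp.single 1 2 + Finsupp.single 2 1) c7
      + monomial (Finsupp.single 0 1 + Finsupp.single 2 2) c8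
      + monomial (Finsupp.single 1 1 + Finsupp.single 2 2) c9
      + monomial (Finsupp.single 0 1 + Finsupp.single 1 1 + Finsupp.single 2 1) c10)
    = c1 * x 0 ^ 3 + c2 * x 1 ^ 3 + c3 * x 2 ^ 3 + c4 * (x 0 ^ 2 * x 1)
      + c5 * (x 0 ^ 2 * x 2) + c6 * (x 0 * x 1 ^ 2) + c7 * (x 1 ^ 2 * x 2)
      + c8 * (x 0 * x 2 ^ 2) + c9 * (x 1 * x 2 ^ 2) + c10 * (x 0 * x 1 * x 2) := by
  simp [eval_monomial, Finsupp.prod_add_index', Finsupp.prod_single_index, pow_add]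

set_option maxHeartbeats 2000000 in
/-- over an algebraically closed field of characteristic ≠ 3, every ternary
cubic form vanishing at all points of `Φ₀` is a linear combination of `x³ + y³ + z³`
and `xyz`. -/
theorem cubics_through_flexScheme0 (k : Type*) [Field k] [IsAlgClosed k] (h3 : (3 : k) ≠ 0)
    (G : MvPolynomial (Fin 3) k) (hG : G.IsHomogeneous 3)
    (hvan : ∀ P ∈ flexScheme0 k, eval P.rep G = 0) :
    ∃ a b : k, G = C a * (X 0 ^ 3 + X 1 ^ 3 + X 2 ^ 3) + C b * (X 0 * X 1 * X 2) := by
  -- names for the ten coefficients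
  set c1 := coeff (Finsupp.single 0 3) G with hc1
  set c2 := coeff (Finsupp.single 1 3) G with hc2
  set c3 := coeff (Finsupp.single 2 3) G with hc3
  set c4 := coeff (Finsupp.single 0 2 + Finsupp.single 1 1) G with hc4
  set c5 := coeff (Finsupp.single 0 2 + Finsupp.single 2 1) G with hc5
  set c6 := coeff (Finsupp.single 0 1 + Finsupp.single 1 2) G with hc6
  set c7 := coeff (Finsupp.single 1 2 + Finsupp.single 2 1) G with hc7
  set c8 := coeff (Finsupp.single 0 1 + Finsupp.single 2 2) G with hc8
  set c9 := coeff (Finsupp.single 1 1 + Finsupp.single 2 2) G with hc9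
  set c10 := coeff (Finsupp.single 0 1 + Finsupp.single 1 1 + Finsupp.single 2 1) G with hc10
  have hsum := cubic_decomp G hG
  have hEv : ∀ x : Fin 3 → k, eval x G
      = c1 * x 0 ^ 3 + c2 * x 1 ^ 3 + c3 * x 2 ^ 3 + c4 * (x 0 ^ 2 * x 1)
      + c5 * (x 0 ^ 2 * x 2) + c6 * (x 0 * x 1 ^ 2) + c7 * (x 1 ^ 2 * x 2)
      + c8 * (x 0 * x 2 ^ 2) + c9 * (x 1 * x 2 ^ 2) + c10 * (x 0 * x 1 * x 2) := by
    intro x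
    rw [hsum]
    exact eval10 _ _ _ _ _ _ _ _ _ _ x
  -- vanishing at any nonzero vector satisfying the equations
  have key : ∀ v : Fin 3 → k, v ≠ 0 →
      v 0 ^ 3 + v 1 ^ 3 + v 2 ^ 3 = 0 → v 0 * v 1 * v 2 = 0 → eval v G = 0 := by
    intro v hv h1 h2
    set P : ℙ k (Fin 3 → k) := Projectivization.mk k v hv with hP
    obtain ⟨u, hu⟩ := (Projectivization.mk_eq_mk_iff k _ _ P.rep_nonzero hv).mp
      (Projectivization.mk_rep P)
    have hrep : ∀ i, P.rep i = (u : k) * v i := by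
      intro i; rw [← hu]; rfl
    have hmem : P ∈ flexScheme0 k := by
      refine ⟨?_, ?_⟩ <;> rw [hrep 0, hrep 1, hrep 2]
      · linear_combination ((u : k)) ^ 3 * h1
      · linear_combination ((u : k)) ^ 3 * h2
    have h0 := hvan P hmem
    have hPrep : P.rep = fun i => (u : k) * v i := funext hrep
    rw [hPrep, hEv] at h0
    rw [hEv]
    have hfac : (u : k) ^ 3 * (c1 * v 0 ^ 3 + c2 * v 1 ^ 3 + c3 * v 2 ^ 3
        + c4 * (v 0 ^ 2 * v 1) + c5 * (v 0 ^ 2 * v 2) + c6 * (v 0 * v 1 ^ 2)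
        + c7 * (v 1 ^ 2 * v 2) + c8 * (v 0 * v 2 ^ 2) + c9 * (v 1 * v 2 ^ 2)
        + c10 * (v 0 * v 1 * v 2)) = 0 := by linear_combination h0
    exact (mul_eq_zero.mp hfac).resolve_left (pow_ne_zero 3 u.ne_zero)
  -- a primitive cube root of unity
  obtain ⟨ω, hωroot⟩ := IsAlgClosed.exists_root
    (Polynomial.X ^ 2 + Polynomial.X + 1 : Polynomial k)
    (by rw [show (Polynomial.X ^ 2 + Polynomial.X + 1 : Polynomial k).degree = 2 from by
          compute_degree!]
        norm_num)
  have hω : ω ^ 2 + ω + 1 = 0 := by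
    simpa using hωroot
  have hω3 : ω ^ 3 = 1 := by linear_combination (ω - 1) * hω
  -- the nine points
  have keyE : ∀ v : Fin 3 → k, v ≠ 0 →
      v 0 ^ 3 + v 1 ^ 3 + v 2 ^ 3 = 0 → v 0 * v 1 * v 2 = 0 →
      c1 * v 0 ^ 3 + c2 * v 1 ^ 3 + c3 * v 2 ^ 3 + c4 * (v 0 ^ 2 * v 1)
      + c5 * (v 0 ^ 2 * v 2) + c6 * (v 0 * v 1 ^ 2) + c7 * (v 1 ^ 2 * v 2)
      + c8 * (v 0 * v 2 ^ 2) + c9 * (v 1 * v 2 ^ 2) + c10 * (v 0 * v 1 * v 2) = 0 := by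
    intro v hv h1 h2
    rw [← hEv]
    exact key v hv h1 h2
  have hne : ∀ t : k, (![(0:k), 1, t] ≠ 0) := by
    intro t h; have := congr_fun h 1; simpa using this
  have hne' : ∀ s t : k, (![(1:k), s, t] ≠ 0) := by
    intro s t h; have := congr_fun h 0; simpa using this
  -- family 1 : x = 0
  have E11 := keyE ![0, 1, -1] (hne _) (by norm_num [Matrix.cons_val_two]) (by norm_num)
  have E12 := keyE ![0, 1, -ω] (hne _) (by simp; linear_combination -hω3) (by simp)
  have E13 := keyE ![0, 1, -ω^2] (hne _) (by simp; linear_combination -(ω^3+1) * hω3) (by simp)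
  simp only [Matrix.cons_val_zero, Matrix.cons_val_one, Matrix.head_cons,
    Matrix.cons_val_two, Matrix.tail_cons] at E11 E12 E13
  -- family 2 : y = 0
  have E21 := keyE ![1, 0, -1] (hne' _ _) (by norm_num [Matrix.cons_val_two]) (by norm_num)
  have E22 := keyE ![1, 0, -ω] (hne' _ _) (by simp; linear_combination -hω3) (by simp)
  have E23 := keyE ![1, 0, -ω^2] (hne' _ _) (by simp; linear_combination -(ω^3+1) * hω3) (by simp)
  simp only [Matrix.cons_val_zero, Matrix.cons_val_one, Matrix.head_cons,
    Matrix.cons_val_two, Matrix.tail_cons] at E21 E22 E23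
  -- family 3 : z = 0
  have E31 := keyE ![1, -1, 0] (hne' _ _) (by norm_num [Matrix.cons_val_two]) (by norm_num [Matrix.cons_val_two])
  have E32 := keyE ![1, -ω, 0] (hne' _ _) (by simp; linear_combination -hω3) (by simp)
  have E33 := keyE ![1, -ω^2, 0] (hne' _ _) (by simp; linear_combination -(ω^3+1) * hω3) (by simp)
  simp only [Matrix.cons_val_zero, Matrix.cons_val_one, Matrix.head_cons,
    Matrix.cons_val_two, Matrix.tail_cons] at E31 E32 E33
  -- solve the linear systems
  have solve : ∀ A B C D : k,
      A + B * (-1) + C * (-1)^2 + D * (-1)^3 = 0 →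
      A + B * (-ω) + C * (-ω)^2 + D * (-ω)^3 = 0 →
      A + B * (-ω^2) + C * (-ω^2)^2 + D * (-ω^2)^3 = 0 →
      B = 0 ∧ C = 0 ∧ A = D := by
    intro A B C D e1 e2raw e3raw
    have e2 : A - B * ω + C * ω^2 - D = 0 := by linear_combination e2raw + D * hω3
    have e3 : A - B * ω^2 + C * ω - D = 0 := by
      linear_combination e3raw + (D * (ω^3 + 1) - C * ω) * hω3
    have hB : 3 * B = 0 := by
      linear_combination (-1) * e1 - ω^2 * e2 - ω * e3
        + (A - 2*B*(ω-1) + C*(ω^2-ω+1) - D) * hω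
    have hC : 3 * C = 0 := by
      linear_combination e1 + ω * e2 + ω^2 * e3
        + (-A + B*(ω^2-ω+1) - 2*C*(ω-1) + D) * hω
    have hAD : 3 * (A - D) = 0 := by
      linear_combination e1 + e2 + e3 + (B - C) * hω
    exact ⟨(mul_eq_zero.mp hB).resolve_left h3, (mul_eq_zero.mp hC).resolve_left h3,
      sub_eq_zero.mp ((mul_eq_zero.mp hAD).resolve_left h3)⟩
  obtain ⟨h7, h9, h23⟩ := solve c2 c7 c9 c3 (by linear_combination E11)
    (by linear_combination E12) (by linear_combination E13)
  obtain ⟨h5, h8, h13⟩ := solve c1 c5 c8 c3 (by linear_combination E21)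
    (by linear_combination E22) (by linear_combination E23)
  obtain ⟨h4, h6, h12⟩ := solve c1 c4 c6 c2 (by linear_combination E31)
    (by linear_combination E32) (by linear_combination E33)
  refine ⟨c1, c10, ?_⟩
  rw [hsum]
  rw [← hc1, ← hc2, ← hc3, ← hc4, ← hc5, ← hc6, ← hc7, ← hc8, ← hc9, ← hc10]
  rw [h4, h5, h6, h7, h8, h9, ← h12, ← h13]
  simp only [monomial_zero]
  rw [show (monomial (Finsupp.single 0 3) c1 : MvPolynomial (Fin 3) k)
      = C c1 * X 0 ^ 3 by rw [C_mul_X_pow_eq_monomial],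
    show (monomial (Finsupp.single 1 3) c1 : MvPolynomial (Fin 3) k)
      = C c1 * X 1 ^ 3 by rw [C_mul_X_pow_eq_monomial],
    show (monomial (Finsupp.single 2 3) c1 : MvPolynomial (Fin 3) k)
      = C c1 * X 2 ^ 3 by rw [C_mul_X_pow_eq_monomial]]
  rw [show (monomial (Finsupp.single 0 1 + Finsupp.single 1 1 + Finsupp.single 2 1) c10
      : MvPolynomial (Fin 3) k) = C c10 * (X 0 * X 1 * X 2) by
        rw [X, X, X, monomial_mul, monomial_mul, C_apply, monomial_mul]; simp]
  ring

end
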